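/- arXiv:1012.5206 — 4 statements merged into one kernel-verified Lean document; each statement's English description precedes it below -/
import Mathlib

section
/- The function G(t) = 1 + t·₂F₁(1/3,2/3;5/3;t)/(1-t)^{2/3} + C·t^{1/3}/(1-t)^{2/3} satisfies the first-order ODE t - 1 + (t+1)G(t) - 3t(1-t)G'(t) = 0 on (0,1), for any constant C. -/
/-!
Write `G = 1 + u`; the equation becomes `3t(1-t)u' = 2t + (t+1)u`. The function
`t^{1/3}(1-t)^{-2/3}` solves the homogeneous equation, and for `u = t F(t) (1-t)^{-2/3}` with
`F = ₂F₁(1/3, 2/3; 5/3; ·)` the equation reduces to `3tF' + 2F = 2(1-t)^{-1/3}`. Since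
`(2/3)ₙ (3n+2) = 2 (5/3)ₙ`, this holds coefficientwise against the binomial series
`(1-t)^{-1/3} = ∑ (1/3)ₙ/n! tⁿ`.
-/

open Real Filter Set Asymptotics MeasureTheory Complex

/-- The Gauss hypergeometric function `₂F₁(a, b; c; t)`, defined by its power series. -/
noncomputable def hyp (a b c t : ℝ) : ℝ :=
  ∑' n : ℕ, ((ascPochhammer ℝ n).eval a * (ascPochhammer ℝ n).eval b) /
    ((ascPochhammer ℝ n).eval c * (n.factorial : ℝ)) * t ^ n

open scoped Nat

lemma ringChoose_add_natCast_sub_one (a : ℝ) (n : ℕ) :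
    Ring.choose (a + n - 1) n = (ascPochhammer ℝ n).eval a / n ! := by
  rw [Ring.choose_eq_smul, Polynomial.descPochhammer_smeval_eq_ascPochhammer,
    Polynomial.ascPochhammer_smeval_eq_eval, smul_eq_mul, div_eq_inv_mul]
  ring_nf

lemma hasSum_ascPochhammer_div_factorial_mul_pow (a : ℝ) {t : ℝ} (ht : |t| < 1) :
    HasSum (fun n => (ascPochhammer ℝ n).eval a / n ! * t ^ n) (1 / (1 - t) ^ a) := by
  have h := (Real.one_div_one_sub_rpow_hasFPowerSeriesOnBall_zero a).hasSum
    (y := t) (by simpa [enorm_eq_nnnorm, ← NNReal.coe_lt_coe] using ht)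
  simpa [FormalMultilinearSeries.ofScalars_apply_eq, ringChoose_add_natCast_sub_one,
    mul_comm] using h

lemma ascPochhammer_eval_le_factorial {x : ℝ} (hx0 : 0 < x) (hx1 : x ≤ 1) (n : ℕ) :
    (ascPochhammer ℝ n).eval x ≤ n ! := by
  induction n with
  | zero => simp
  | succ n ih =>
    rw [ascPochhammer_succ_eval, Nat.factorial_succ, Nat.cast_mul, mul_comm ((n + 1 : ℕ) : ℝ)]
    have := (ascPochhammer_pos n x hx0).le
    gcongr
    push_cast
    linarith

lemma ascPochhammer_eval_mul_add_natCast (a : ℝ) (n : ℕ) :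
    (ascPochhammer ℝ n).eval a * (a + n) = a * (ascPochhammer ℝ n).eval (a + 1) := by
  rw [← ascPochhammer_succ_eval, ascPochhammer_succ_left]
  simp [Polynomial.eval_comp]

section PowerSeries

variable {a : ℕ → ℝ} {M : ℝ}

lemma summable_natCast_mul_pow_pred {r : ℝ} (hr : |r| < 1) :
    Summable fun n : ℕ => (n : ℝ) * r ^ (n - 1) := by
  rw [← summable_nat_add_iff 1]
  refine ((summable_pow_mul_geometric_of_norm_lt_one 1 hr).add
    (summable_geometric_of_abs_lt_one hr)).congr fun n => ?_
  simp only [Nat.add_sub_cancel]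
  push_cast
  ring

lemma summable_mul_pow_of_abs_le (hM : ∀ n, |a n| ≤ M) {t : ℝ} (ht : |t| < 1) :
    Summable fun n => a n * t ^ n := by
  refine .of_norm_bounded ((summable_geometric_of_abs_lt_one ht).abs.mul_left M) fun n => ?_
  rw [norm_mul, norm_pow, Real.norm_eq_abs, Real.norm_eq_abs, abs_pow]
  exact mul_le_mul_of_nonneg_right (hM n) (by positivity)

lemma hasDerivAt_tsum_mul_pow (hM : ∀ n, |a n| ≤ M) {t : ℝ} (ht : |t| < 1) :
    HasDerivAt (fun s => ∑' n, a n * s ^ n) (∑' n, a n * (n * t ^ (n - 1))) t := by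
  obtain ⟨r, htr, hr1⟩ := exists_between ht
  have hr : |r| < 1 := by rwa [abs_of_pos ((abs_nonneg t).trans_lt htr)]
  have hmem : ∀ {y : ℝ}, |y| < r → y ∈ Ioo (-r) r := fun hy => abs_lt.mp hy
  refine hasDerivAt_tsum_of_isPreconnected ((summable_natCast_mul_pow_pred hr).mul_left M)
    isOpen_Ioo isPreconnected_Ioo (fun n y _ => (hasDerivAt_pow n y).const_mul (a n))
    (fun n y hy => ?_) (hmem (y := 0) (by simpa using (abs_nonneg t).trans_lt htr))
    (summable_mul_pow_of_abs_le hM (t := 0) (by simp)) (hmem htr)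
  have hy : |y| ≤ r := abs_le.mpr ⟨hy.1.le, hy.2.le⟩
  simp only [norm_mul, norm_pow, Real.norm_eq_abs, Nat.abs_cast]
  gcongr
  · exact (abs_nonneg _).trans (hM 0)
  · exact hM n

lemma mul_tsum_mul_natCast_mul_pow_pred (a : ℕ → ℝ) (t : ℝ) :
    t * ∑' n, a n * (n * t ^ (n - 1)) = ∑' n, n * a n * t ^ n := by
  rw [← tsum_mul_left]
  congr 1 with (_ | n)
  · simp
  · simp only [Nat.add_sub_cancel, pow_succ]
    ring

end PowerSeries

/-- `hyp a b c t` unfolds to `∑' n, hypCoeff a b c n * t ^ n`. -/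
noncomputable def hypCoeff (a b c : ℝ) (n : ℕ) : ℝ :=
  (ascPochhammer ℝ n).eval a * (ascPochhammer ℝ n).eval b / ((ascPochhammer ℝ n).eval c * n !)

section ShiftedHyp

variable {a b : ℝ}

lemma hypCoeff_add_one_mul (hb : 0 < b + 1) (n : ℕ) :
    hypCoeff a b (b + 1) n * (b + n) = b * ((ascPochhammer ℝ n).eval a / n !) := by
  have := (ascPochhammer_pos n _ hb).ne'
  rw [hypCoeff]
  field_simp
  linear_combination (ascPochhammer ℝ n).eval a * ascPochhammer_eval_mul_add_natCast b n

lemma abs_hypCoeff_add_one_le_one (ha0 : 0 < a) (ha1 : a ≤ 1) (hb : 0 < b) (n : ℕ) :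
    |hypCoeff a b (b + 1) n| ≤ 1 := by
  have hbn : 0 < b + n := by positivity
  have hc : hypCoeff a b (b + 1) n = b / (b + n) * ((ascPochhammer ℝ n).eval a / n !) := by
    rw [div_mul_eq_mul_div, eq_div_iff hbn.ne', hypCoeff_add_one_mul (by linarith)]
  have hbinom : 0 ≤ (ascPochhammer ℝ n).eval a / n ! ∧ (ascPochhammer ℝ n).eval a / n ! ≤ 1 :=
    ⟨by have := ascPochhammer_pos n a ha0; positivity,
      div_le_one_of_le₀ (ascPochhammer_eval_le_factorial ha0 ha1 n) (by positivity)⟩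
  have hratio : 0 ≤ b / (b + n) ∧ b / (b + n) ≤ 1 :=
    ⟨by positivity, div_le_one_of_le₀ (by simp) hbn.le⟩
  rw [hc, abs_of_nonneg (mul_nonneg hratio.1 hbinom.1)]
  exact mul_le_one₀ hratio.2 hbinom.1 hbinom.2

theorem exists_hasDerivAt_hyp_add_one (ha0 : 0 < a) (ha1 : a ≤ 1) (hb : 0 < b) {t : ℝ}
    (ht : |t| < 1) :
    ∃ D, HasDerivAt (hyp a b (b + 1)) D t ∧ t * D + b * hyp a b (b + 1) t = b / (1 - t) ^ a := by
  set c := hypCoeff a b (b + 1)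
  have hc := abs_hypCoeff_add_one_le_one ha0 ha1 hb
  refine ⟨_, hasDerivAt_tsum_mul_pow hc ht, ?_⟩
  have hshifted : HasSum (fun n => (b + n) * c n * t ^ n) (b / (1 - t) ^ a) := by
    have h := (hasSum_ascPochhammer_div_factorial_mul_pow a ht).mul_left b
    rw [mul_one_div] at h
    refine h.congr_fun fun n => ?_
    rw [mul_comm (b + n), hypCoeff_add_one_mul (by linarith), mul_assoc]
  have hbF : HasSum (fun n => b * (c n * t ^ n)) (b * hyp a b (b + 1) t) :=
    (summable_mul_pow_of_abs_le hc ht).hasSum.mul_left b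
  have hEuler : HasSum (fun n => n * c n * t ^ n) (b / (1 - t) ^ a - b * hyp a b (b + 1) t) :=
    (hshifted.sub hbF).congr_fun fun n => by ring
  rw [mul_tsum_mul_natCast_mul_pow_pred, hEuler.tsum_eq]
  ring

end ShiftedHyp

section OneSubRpow

variable {t : ℝ}

lemma hasDerivAt_rpow_div_one_sub_rpow (p q : ℝ) (ht0 : 0 < t) (ht1 : t < 1) :
    ∃ d, HasDerivAt (fun s => s ^ p / (1 - s) ^ q) d t ∧
      t * (1 - t) * d = (p * (1 - t) + q * t) * (t ^ p / (1 - t) ^ q) := by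
  have h1t : 0 < 1 - t := by linarith
  have hnum := Real.hasDerivAt_rpow_const (p := p) (Or.inl ht0.ne')
  have hden := (Real.hasDerivAt_rpow_const (p := q) (Or.inl h1t.ne')).comp t
    ((hasDerivAt_id t).const_sub 1)
  refine ⟨_, hnum.div hden (Real.rpow_pos_of_pos h1t q).ne', ?_⟩
  have := (Real.rpow_pos_of_pos h1t q).ne'
  rw [Real.rpow_sub_one ht0.ne', Real.rpow_sub_one h1t.ne']
  field_simp
  ring

lemma hasDerivAt_mul_div_one_sub_rpow_two_thirds {F : ℝ → ℝ} {D : ℝ} (hF : HasDerivAt F D t)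
    (ht1 : t < 1) (hFD : t * D + 2 / 3 * F t = 2 / 3 / (1 - t) ^ (1 / 3 : ℝ)) :
    ∃ d, HasDerivAt (fun s => s * F s / (1 - s) ^ (2 / 3 : ℝ)) d t ∧
      3 * t * (1 - t) * d = 2 * t + (t + 1) * (t * F t / (1 - t) ^ (2 / 3 : ℝ)) := by
  have h1t : 0 < 1 - t := by linarith
  have hden := (Real.hasDerivAt_rpow_const (p := 2 / 3) (Or.inl h1t.ne')).comp t
    ((hasDerivAt_id t).const_sub 1)
  refine ⟨_, ((hasDerivAt_id t).mul hF).div hden (Real.rpow_pos_of_pos h1t _).ne', ?_⟩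
  have hroots : (1 - t) ^ (1 / 3 : ℝ) * (1 - t) ^ (2 / 3 : ℝ) = 1 - t := by
    rw [← Real.rpow_add h1t]; norm_num
  have := (Real.rpow_pos_of_pos h1t (1 / 3)).ne'
  have := (Real.rpow_pos_of_pos h1t (2 / 3)).ne'
  simp only [Real.rpow_sub_one h1t.ne', Pi.mul_apply, id]
  field_simp at hFD ⊢
  linear_combination t * (1 - t) ^ (2 / 3 : ℝ) * hFD - t * (3 * t * D + 2 * F t) * hroots

end OneSubRpow

/-- the one-parameter family
`G_C(t) = 1 + t·₂F₁(1/3,2/3;5/3;t)/(1-t)^{2/3} + C·t^{1/3}/(1-t)^{2/3}`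
solves the ODE `t - 1 + (t+1)·G(t) - 3t(1-t)·G'(t) = 0` on `(0,1)`. -/
theorem stmt0 (C : ℝ) :
    ∀ t ∈ Set.Ioo (0 : ℝ) 1,
      ∃ g' : ℝ,
        HasDerivAt (fun s : ℝ =>
            1 + s * hyp (1/3) (2/3) (5/3) s / (1 - s) ^ ((2 : ℝ)/3)
              + C * s ^ ((1 : ℝ)/3) / (1 - s) ^ ((2 : ℝ)/3)) g' t ∧
        t - 1 + (t + 1) *
            (1 + t * hyp (1/3) (2/3) (5/3) t / (1 - t) ^ ((2 : ℝ)/3)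
              + C * t ^ ((1 : ℝ)/3) / (1 - t) ^ ((2 : ℝ)/3))
          - 3 * t * (1 - t) * g' = 0 := by
  rintro t ⟨ht0, ht1⟩
  obtain ⟨D, hF, hFD⟩ := exists_hasDerivAt_hyp_add_one (a := 1 / 3) (b := 2 / 3)
    (by norm_num) (by norm_num) (by norm_num) (abs_lt.mpr ⟨by linarith, ht1⟩)
  rw [show (2 / 3 : ℝ) + 1 = 5 / 3 by norm_num] at hF hFD
  obtain ⟨dp, hp, hp_ode⟩ := hasDerivAt_mul_div_one_sub_rpow_two_thirds hF ht1 hFD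
  obtain ⟨dh, hh, hh_ode⟩ := hasDerivAt_rpow_div_one_sub_rpow (1 / 3) (2 / 3) ht0 ht1
  have hG := ((hasDerivAt_const t (1 : ℝ)).add hp).add (hh.const_mul C)
  simp only [← mul_div_assoc] at hG
  refine ⟨_, hG, ?_⟩
  linear_combination -hp_ode - 3 * C * hh_ode
end

section
/- The function G(t) = 1 - t·₂F₁(1, 4/3; 5/3; 1-t) on (0,1) satisfies the ODE t - 1 + (t+1)G(t) - 3t(1-t)G'(t) = 0, with boundary values lim_{t→0+} G(t) = 1 and lim_{t→1-} G(t) = 0. -/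
/-!
Put `x = 1 - t`, so that `G(t) = 1 - (1 - x) F(x)` with `F = ₂F₁(1, 4/3; 5/3; ·) = ∑ cₙ xⁿ`,
`cₙ = (4/3)ₙ / (5/3)ₙ`. The recurrence `(5/3 + n) cₙ₊₁ = (4/3 + n) cₙ` makes the power series of
`3x(1 - x)F' + (2 - 4x)F` telescope to `2`, and this first-order equation for `F` is the stated ODE
for `G`. As a power series, `F` is continuous at `0` with `F 0 = 1`, whence `G(1-) = 0`. Finally
`cₙ → 0` (indeed `cₙ³ ≤ 4 / (3n + 4)`), so by Abel's theorem `(1 - x) F(x) → 0` as `x → 1-`,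
whence `G(0+) = 1`.
-/

open Real Filter Set Asymptotics MeasureTheory Complex

/-- `G(t) = 1 - t·₂F₁(1, 4/3; 5/3; 1-t)`. -/
noncomputable def Gfun (t : ℝ) : ℝ := 1 - t * hyp 1 (4/3) (5/3) (1 - t)

open scoped Topology

section PowerSeries

variable {c : ℕ → ℝ} {C x : ℝ}

theorem summable_mul_pow_of_abs_le_s1 (hc : ∀ n, |c n| ≤ C) (hx : |x| < 1) :
    Summable fun n => c n * x ^ n :=
  .of_norm_bounded ((summable_geometric_of_lt_one (abs_nonneg x) hx).mul_left C) fun n => by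
    rw [norm_mul, norm_pow, Real.norm_eq_abs, Real.norm_eq_abs]
    exact mul_le_mul_of_nonneg_right (hc n) (by positivity)

theorem hasDerivAt_tsum_mul_pow_s1 (hc : ∀ n, |c n| ≤ C) (hx : |x| < 1) :
    HasDerivAt (fun y => ∑' n, c n * y ^ n) (∑' n, c n * (n * x ^ (n - 1))) x := by
  obtain ⟨r, hxr, hr1⟩ := exists_between hx
  have hr0 : 0 < r := (abs_nonneg x).trans_lt hxr
  have hu : Summable fun n : ℕ => C * (n * r ^ (n - 1)) := by
    refine .mul_left C ((summable_nat_add_iff 1).1 ?_)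
    simpa [add_mul] using (summable_pow_mul_geometric_of_norm_lt_one 1
      (by rwa [Real.norm_eq_abs, abs_of_pos hr0])).add (summable_geometric_of_lt_one hr0.le hr1)
  refine hasDerivAt_tsum_of_isPreconnected hu isOpen_Ioo (convex_Ioo (-r) r).isPreconnected
    (fun n y _ => (hasDerivAt_pow n y).const_mul (c n)) (fun n y hy => ?_)
    (abs_lt.1 hxr) (summable_mul_pow_of_abs_le_s1 hc (hxr.trans hr1)) (abs_lt.1 hxr)
  rw [Real.norm_eq_abs, abs_mul, abs_mul, Nat.abs_cast, abs_pow]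
  gcongr
  · exact (abs_nonneg _).trans (hc 0)
  · exact hc n
  · exact abs_le.2 ⟨hy.1.le, hy.2.le⟩

theorem Summable.tsum_sub_succ {a : ℕ → ℝ} (ha : Summable a) :
    ∑' n, (a n - a (n + 1)) = a 0 := by
  rw [ha.tsum_sub ((summable_nat_add_iff 1).2 ha), ha.tsum_eq_zero_add]
  ring

theorem tendsto_one_sub_mul_tsum_mul_pow (hc : Tendsto c atTop (𝓝 0)) :
    Tendsto (fun x => (1 - x) * ∑' n, c n * x ^ n) (𝓝[<] 1) (𝓝 0) := by
  obtain ⟨C, hC⟩ := (continuous_abs.tendsto 0 |>.comp hc).bddAbove_range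
  have hcC : ∀ n, |c n| ≤ C := fun n => hC ⟨n, rfl⟩
  -- `(1 - x) ∑ cₙ xⁿ = ∑ (cₙ - cₙ₋₁) xⁿ`, and the partial sums of `∑ (cₙ - cₙ₋₁)` are the `cₙ`
  set d : ℕ → ℝ := fun n => if n = 0 then 0 else c (n - 1)
  have hsum : ∀ n, ∑ i ∈ Finset.range (n + 1), (c i - d i) = c n := by
    intro n
    induction n with
    | zero => simp [d]
    | succ n ih => rw [Finset.sum_range_succ, ih]; simp [d]
  have habel := Real.tendsto_tsum_powerSeries_nhdsWithin_lt (f := fun n => c n - d n) (l := 0)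
    ((tendsto_add_atTop_iff_nat 1).1 (by simpa only [hsum] using hc))
  refine habel.congr' (eventually_of_mem (Ioo_mem_nhdsLT (by norm_num : (-1 : ℝ) < 1)) ?_)
  intro x hx
  have hx1 : |x| < 1 := abs_lt.2 hx
  have hcs := summable_mul_pow_of_abs_le_s1 hcC hx1
  have hds : Summable fun n => d n * x ^ n := by
    refine (summable_nat_add_iff 1).1 ?_
    simpa [d, pow_succ, ← mul_assoc] using hcs.mul_right x
  rw [funext fun n => sub_mul (c n) (d n) (x ^ n), hcs.tsum_sub hds, hds.tsum_eq_zero_add]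
  simp only [d, ↓reduceIte, Nat.add_one_ne_zero, add_tsub_cancel_right, pow_succ, ← mul_assoc,
    tsum_mul_right]
  ring

end PowerSeries

theorem hyp_zero (a b c : ℝ) : hyp a b c 0 = 1 := by
  rw [hyp, tsum_eq_single 0 fun n hn => by simp [hn]]
  simp

noncomputable def pochhammerRatio (b c : ℝ) (n : ℕ) : ℝ :=
  (ascPochhammer ℝ n).eval b / (ascPochhammer ℝ n).eval c

theorem hyp_one_left (b c x : ℝ) : hyp 1 b c x = ∑' n, pochhammerRatio b c n * x ^ n := by
  simp only [hyp, pochhammerRatio, ascPochhammer_eval_one]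
  congr 1 with n
  rw [mul_comm _ (n.factorial : ℝ), mul_div_mul_left _ _ (by positivity)]

section PochhammerRatio

variable {b c : ℝ}

@[simp] theorem pochhammerRatio_zero : pochhammerRatio b c 0 = 1 := by simp [pochhammerRatio]

theorem pochhammerRatio_succ (hc : 0 < c) (n : ℕ) :
    pochhammerRatio b c (n + 1) = (b + n) / (c + n) * pochhammerRatio b c n := by
  have := (ascPochhammer_pos n c hc).ne'
  simp only [pochhammerRatio, ascPochhammer_succ_eval]
  field_simp

theorem pochhammerRatio_pos (hb : 0 < b) (hc : 0 < c) (n : ℕ) : 0 < pochhammerRatio b c n :=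
  div_pos (ascPochhammer_pos n b hb) (ascPochhammer_pos n c hc)

theorem abs_pochhammerRatio_le_one (hb : 0 < b) (hbc : b ≤ c) (n : ℕ) :
    |pochhammerRatio b c n| ≤ 1 := by
  rw [abs_of_pos (pochhammerRatio_pos hb (hb.trans_le hbc) n)]
  induction n with
  | zero => simp
  | succ n ih =>
    have hc : 0 < c := hb.trans_le hbc
    rw [pochhammerRatio_succ hc]
    exact mul_le_one₀ ((div_le_one (by positivity)).2 (by linarith))
      (pochhammerRatio_pos hb hc n).le ih

end PochhammerRatio

theorem hyp_one_left_ode {b c x : ℝ} (hb : 0 < b) (hbc : b ≤ c) (hx : |x| < 1) :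
    ∃ F', HasDerivAt (hyp 1 b c) F' x ∧
      x * (1 - x) * F' + (c - 1 - b * x) * hyp 1 b c x = c - 1 := by
  set d := pochhammerRatio b c
  have hd := abs_pochhammerRatio_le_one hb hbc
  have hF : hyp 1 b c = fun y => ∑' n, d n * y ^ n := funext (hyp_one_left b c)
  refine ⟨_, hF ▸ hasDerivAt_tsum_mul_pow_s1 hd hx, ?_⟩
  have hx_deriv : x * ∑' n, d n * (n * x ^ (n - 1)) = ∑' n, n * (d n * x ^ n) := by
    rw [← tsum_mul_left]
    congr 1 with n
    rcases n with _ | n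
    · simp
    · simp only [Nat.add_sub_cancel, pow_succ]; push_cast; ring
  have hs := summable_mul_pow_of_abs_le_s1 hd hx
  have hns : Summable fun n : ℕ => n * (d n * x ^ n) := by
    refine .of_norm_bounded (summable_pow_mul_geometric_of_norm_lt_one 1
      (by rwa [Real.norm_eq_abs, abs_abs])) fun n => ?_
    rw [norm_mul, norm_mul, norm_pow, Real.norm_eq_abs, Real.norm_eq_abs, Real.norm_eq_abs,
      Nat.abs_cast, pow_one]
    exact mul_le_mul_of_nonneg_left (mul_le_of_le_one_left (by positivity) (hd n)) (by positivity)
  -- telescoping: the `n`-th term is `aₙ - aₙ₊₁` by the recurrence of the coefficients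
  set a : ℕ → ℝ := fun n => (n + c - 1) * (d n * x ^ n)
  have ha : Summable a := by
    simpa [a, add_sub_assoc, add_mul] using hns.add (hs.mul_left (c - 1))
  calc x * (1 - x) * ∑' n, d n * (n * x ^ (n - 1)) + (c - 1 - b * x) * hyp 1 b c x
      = ∑' n, (a n - a (n + 1)) := by
        rw [mul_comm x, mul_assoc, hx_deriv, hF, ← tsum_mul_left, ← tsum_mul_left,
          ← (hns.mul_left _).tsum_add (hs.mul_left _)]
        congr 1 with n
        have : c + n ≠ 0 := by linarith [(n.cast_nonneg : (0 : ℝ) ≤ n)]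
        simp only [a, pochhammerRatio_succ (hb.trans_le hbc), d]
        field_simp
        push_cast
        ring
    _ = c - 1 := by rw [ha.tsum_sub_succ]; simp [a, d]

theorem pochhammerRatio_four_thirds_five_thirds_pow_three_le (n : ℕ) :
    pochhammerRatio (4 / 3) (5 / 3) n ^ 3 ≤ 4 / (3 * n + 4) := by
  induction n with
  | zero => simp
  | succ n ih =>
    rw [pochhammerRatio_succ (by norm_num), mul_pow]
    calc ((4 / 3 + n) / (5 / 3 + n)) ^ 3 * pochhammerRatio (4 / 3) (5 / 3) n ^ 3
        ≤ ((4 / 3 + n) / (5 / 3 + n)) ^ 3 * (4 / (3 * n + 4)) := by gcongr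
      _ ≤ 4 / (3 * ↑(n + 1) + 4) := by
        -- `m² (m + 3) ≤ (m + 1)³` for `m = 3n + 4`
        rw [div_pow, div_mul_div_comm, div_le_div_iff₀ (by positivity) (by positivity)]
        push_cast
        nlinarith [sq_nonneg ((n : ℝ) + 5 / 3)]

theorem tendsto_pochhammerRatio_four_thirds_five_thirds :
    Tendsto (pochhammerRatio (4 / 3) (5 / 3)) atTop (𝓝 0) := by
  have hcube : Tendsto (fun n : ℕ => pochhammerRatio (4 / 3) (5 / 3) n ^ 3) atTop (𝓝 0) :=
    squeeze_zero (fun n => pow_nonneg (pochhammerRatio_pos (by norm_num) (by norm_num) n).le 3)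
      pochhammerRatio_four_thirds_five_thirds_pow_three_le
      (tendsto_const_nhds.div_atTop (tendsto_atTop_add_const_right _ 4
        (tendsto_natCast_atTop_atTop.const_mul_atTop (by norm_num))))
  have hroot := hcube.rpow_const (p := ((3 : ℕ) : ℝ)⁻¹) (Or.inr (by positivity))
  rw [Real.zero_rpow (by norm_num)] at hroot
  refine hroot.congr fun n => ?_
  exact Real.pow_rpow_inv_natCast (pochhammerRatio_pos (by norm_num) (by norm_num) n).le
    (by norm_num)

/-- `G` satisfies the ODE `t - 1 + (t+1)G(t) - 3t(1-t)G'(t) = 0` on `(0,1)`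
with boundary values `G(0+) = 1` and `G(1-) = 0`. -/
theorem stmt1 :
    (∀ t ∈ Set.Ioo (0 : ℝ) 1,
      ∃ g' : ℝ, HasDerivAt Gfun g' t ∧
        t - 1 + (t + 1) * Gfun t - 3 * t * (1 - t) * g' = 0) ∧
    Tendsto Gfun (nhdsWithin 0 (Set.Ioi 0)) (nhds 1) ∧
    Tendsto Gfun (nhdsWithin 1 (Set.Iio 1)) (nhds 0) := by
  have hode (x : ℝ) (hx : |x| < 1) :=
    hyp_one_left_ode (b := 4 / 3) (c := 5 / 3) (by norm_num) (by norm_num) hx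
  refine ⟨fun t ⟨ht0, ht1⟩ => ?_, ?_, ?_⟩
  · obtain ⟨F', hF', hF'ode⟩ := hode (1 - t) (abs_lt.2 ⟨by linarith, by linarith⟩)
    refine ⟨_, ((hasDerivAt_id t).mul (hF'.comp t ((hasDerivAt_id t).const_sub 1))).const_sub 1, ?_⟩
    simp only [Gfun, id, Function.comp_apply]
    linear_combination (-3 * t) * hF'ode
  · have hflip : Tendsto (fun t : ℝ => 1 - t) (𝓝[>] 0) (𝓝[<] 1) := by
      simpa using (continuous_sub_left (1 : ℝ)).continuousWithinAt.tendsto_nhdsWithin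
        (x := 0) (s := Ioi 0) (t := Iio 1) fun t ht => by simpa using ht
    have := (tendsto_one_sub_mul_tsum_mul_pow
      tendsto_pochhammerRatio_four_thirds_five_thirds).comp hflip
    unfold Gfun
    simpa [Function.comp_def, ← hyp_one_left] using (tendsto_const_nhds (x := (1 : ℝ))).sub this
  · have hF0 : ContinuousAt (hyp 1 (4 / 3) (5 / 3)) 0 :=
      (hode 0 (by simp)).choose_spec.1.continuousAt
    have hG : ContinuousAt Gfun 1 :=
      continuousAt_const.sub (continuousAt_id.mul
        (hF0.comp_of_eq (continuous_sub_left 1).continuousAt (sub_self 1)))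
    simpa [Gfun, hyp_zero] using hG.tendsto.mono_left nhdsWithin_le_nhds
end

section
/- First-order bubble asymptotics: with L(z) = cos²(arg(z)/2) and F_ε(z) = z/(ε-z), for fixed z ∈ ℍ one has L(F_ε(z)) = (1/4)(Im(1/z))²·ε² + o(ε²) as ε → 0+. -/
/-!
Write `w = F_ε(z)`. Since `cos² (θ/2) = (1 + cos θ)/2` and `cos (arg w) = Re w / |w|`, one has the
exact identity `L(w) · 2|w|(|w| - Re w) = (Im w)²`. As `ε → 0`, `w → F_0(z) = -1`, so the factor
`2|w|(|w| - Re w)` tends to `4`, while `Im w = ε · Im z / |ε - z|²` is `ε · (-Im(1/z) + o(1))`.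
-/

open Filter Asymptotics Set

/-- Schramm's left-passage probability in complex form, `L(z) = cos²(arg(z)/2)`. -/
noncomputable def Lc (z : ℂ) : ℝ := Real.cos (z.arg / 2) ^ 2

/-- `F_ε(z) = z/(ε - z)`. -/
noncomputable def Fmap (ε : ℝ) (z : ℂ) : ℂ := z / (ε - z)

open Topology

theorem Lc_mul_two_norm_mul_norm_sub_re (w : ℂ) :
    Lc w * (2 * ‖w‖ * (‖w‖ - w.re)) = w.im ^ 2 := by
  rcases eq_or_ne w 0 with rfl | hw
  · simp
  have hnorm : ‖w‖ ^ 2 = w.re ^ 2 + w.im ^ 2 := by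
    rw [Complex.sq_norm, Complex.normSq_apply]; ring
  have hpos : 0 < ‖w‖ := norm_pos_iff.mpr hw
  rw [Lc, Real.cos_sq, mul_div_cancel₀ _ two_ne_zero, Complex.cos_arg hw]
  field_simp
  linear_combination hnorm

theorem Fmap_im (ε : ℝ) (z : ℂ) : (Fmap ε z).im = ε * (z.im / Complex.normSq (ε - z)) := by
  simp only [Fmap, Complex.div_im, Complex.sub_re, Complex.sub_im, Complex.ofReal_re,
    Complex.ofReal_im]
  ring

theorem Fmap_zero {z : ℂ} (hz : z ≠ 0) : Fmap 0 z = -1 := by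
  simp [Fmap, hz]

theorem isLittleO_Lc_sub_sq {w : ℝ → ℂ} {k : ℝ → ℝ} (hw : ContinuousAt w 0) (hw0 : w 0 = -1)
    (hk : ContinuousAt k 0) (him : ∀ ε, (w ε).im = ε * k ε) :
    (fun ε => Lc (w ε) - 1 / 4 * k 0 ^ 2 * ε ^ 2) =o[𝓝 0] (fun ε => ε ^ 2) := by
  set D : ℝ → ℝ := fun ε => 2 * ‖w ε‖ * (‖w ε‖ - (w ε).re)
  have hD : ContinuousAt D 0 := by fun_prop
  have hD0 : D 0 = 4 := by norm_num [D, hw0]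
  have hLc : (fun ε => (k ε ^ 2 / D ε - k 0 ^ 2 / D 0) * ε ^ 2)
      =ᶠ[𝓝 0] fun ε => Lc (w ε) - 1 / 4 * k 0 ^ 2 * ε ^ 2 := by
    filter_upwards [hD.eventually_ne (by norm_num [hD0] : D 0 ≠ 0)] with ε hε
    have hL : Lc (w ε) = ε ^ 2 * k ε ^ 2 / D ε := by
      rw [eq_div_iff hε, Lc_mul_two_norm_mul_norm_sub_re, him]; ring
    rw [hL, hD0]; field_simp
  have hlim : Tendsto (fun ε => k ε ^ 2 / D ε - k 0 ^ 2 / D 0) (𝓝 0) (𝓝 0) := by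
    have hcont : ContinuousAt (fun ε => k ε ^ 2 / D ε) 0 := (hk.pow 2).div hD (by norm_num [hD0])
    exact tendsto_sub_nhds_zero_iff.mpr hcont.tendsto
  refine IsLittleO.congr' ?_ hLc EventuallyEq.rfl
  simpa using (isLittleO_one_iff ℝ |>.mpr hlim).mul_isBigO (isBigO_refl (fun ε : ℝ => ε ^ 2) _)

/-- for fixed `z ∈ ℍ`,
`L(F_ε(z)) = (1/4)(Im(1/z))²·ε² + o(ε²)` as `ε → 0+`. -/
theorem stmt11 (z : ℂ) (hz : 0 < z.im) :
    (fun ε : ℝ => Lc (Fmap ε z) - (1/4) * ((1 / z).im) ^ 2 * ε ^ 2)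
      =o[nhdsWithin 0 (Ioi 0)] (fun ε : ℝ => ε ^ 2) := by
  have hz0 : z ≠ 0 := fun h => by simp [h] at hz
  have hk0 : ((1 / z).im) ^ 2 = (z.im / Complex.normSq ((0 : ℝ) - z)) ^ 2 := by
    simp [Complex.inv_im, neg_div]
  have hasymp := isLittleO_Lc_sub_sq (w := fun ε => Fmap ε z)
    (k := fun ε => z.im / Complex.normSq (ε - z))
    (by unfold Fmap; fun_prop (disch := simpa using hz0)) (Fmap_zero hz0)
    (by fun_prop (disch := simpa using hz0)) (fun ε => Fmap_im ε z)
  rw [hk0]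
  exact hasymp.mono nhdsWithin_le_nhds
end

section
/- The expected area of the SLE_{8/3} bubble with bulk point w is infinite: if p_w(z) = (Im(1/z)/Im(1/w))·G(σ(z,w)) with G(t) = 1 - t·₂F₁(1,4/3;5/3;1-t), then ∫_ℍ p_w(z) dA(z) = ∞. -/
open Real Filter Set Asymptotics MeasureTheory Complex

/-- `σ(z,w) = |z-w|²/|z - w̄|²`. -/
noncomputable def sigmaC (z w : ℂ) : ℝ :=
  ‖z - w‖ ^ 2 / ‖z - (starRingEnd ℂ) w‖ ^ 2

/-- `p_w(z) = (Im(1/z)/Im(1/w))·G(σ(z,w))`, the probability that `z` lies in the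
SLE₈/₃ bubble with bulk point `w`. -/
noncomputable def pbulk (w z : ℂ) : ℝ := ((1 / z).im / (1 / w).im) * Gfun (sigmaC z w)

/-! Comparing the coefficients of `₂F₁(1, 4/3; 5/3; s)` with those of `1 + (4/5)·s/(1-s)` gives
`G(t) ≥ (1-t)/5` on `[0, 1]`. Since `1 - σ(z,w) = 4 Im z Im w / |z - w̄|²`, this yields
`p_w(z) ≳ |w|² (Im z)² / (|z|² |z - w̄|²)`, which is `≳ |w|² / (Im z)²` on the cone
`|Re z| < Im z`, `Im z > |w|`. The cone has width `2y` at height `y`, so the area integral is at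
least a multiple of `∫^∞ dy / y = ∞`. -/

open scoped ENNReal ComplexConjugate

lemma ascPochhammer_eval_mul_le {a b : ℝ} (ha : 0 < a) (hab : a ≤ b) {n : ℕ} (hn : 1 ≤ n) :
    b * (ascPochhammer ℝ n).eval a ≤ a * (ascPochhammer ℝ n).eval b := by
  induction n, hn using Nat.le_induction with
  | base => simp [mul_comm]
  | succ n _ ih =>
    have hb : 0 ≤ (ascPochhammer ℝ n).eval b := (ascPochhammer_pos n b (ha.trans_le hab)).le
    rw [ascPochhammer_succ_eval, ascPochhammer_succ_eval]
    calc b * ((ascPochhammer ℝ n).eval a * (a + n))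
        = b * (ascPochhammer ℝ n).eval a * (a + n) := by ring
      _ ≤ a * (ascPochhammer ℝ n).eval b * (a + n) := by gcongr
      _ ≤ a * (ascPochhammer ℝ n).eval b * (b + n) := by gcongr
      _ = a * ((ascPochhammer ℝ n).eval b * (b + n)) := by ring

lemma hyp_one_eq (b c s : ℝ) :
    hyp 1 b c s = ∑' n : ℕ, (ascPochhammer ℝ n).eval b / (ascPochhammer ℝ n).eval c * s ^ n := by
  unfold hyp
  congr 1 with n
  rw [ascPochhammer_eval_one, mul_comm ((ascPochhammer ℝ n).eval c),
    mul_div_mul_left _ _ (by positivity)]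

lemma hyp_one_le {b c s : ℝ} (hb : 0 < b) (hbc : b ≤ c) (hs0 : 0 ≤ s) (hs1 : s < 1) :
    hyp 1 b c s ≤ 1 + b / c * (s / (1 - s)) := by
  set f : ℕ → ℝ := fun n => (ascPochhammer ℝ n).eval b / (ascPochhammer ℝ n).eval c * s ^ n
  have hc : 0 < c := hb.trans_le hbc
  have hf_nonneg (n : ℕ) : 0 ≤ f n := by
    have := ascPochhammer_pos n b hb
    have := ascPochhammer_pos n c hc
    positivity
  have hf_le (n : ℕ) : f (n + 1) ≤ b / c * s ^ (n + 1) := by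
    have hcn := ascPochhammer_pos (n + 1) c hc
    have := ascPochhammer_eval_mul_le hb hbc (Nat.le_add_left 1 n)
    dsimp only [f]
    gcongr ?_ * _
    rw [div_le_div_iff₀ hcn hc]
    linarith
  have hgeom : Summable fun n : ℕ => b / c * s ^ (n + 1) :=
    ((summable_nat_add_iff 1).2 (summable_geometric_of_lt_one hs0 hs1)).mul_left _
  have hf : Summable f :=
    (summable_nat_add_iff 1).1 (hgeom.of_nonneg_of_le (fun n => hf_nonneg _) hf_le)
  have htail : ∑' n : ℕ, b / c * s ^ (n + 1) = b / c * (s / (1 - s)) := by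
    simp_rw [pow_succ]
    rw [tsum_mul_left, tsum_mul_right, tsum_geometric_of_lt_one hs0 hs1, div_eq_inv_mul s]
  have hf_shift : Summable fun n => f (n + 1) := (summable_nat_add_iff 1).2 hf
  rw [hyp_one_eq, hf.tsum_eq_zero_add, ← htail]
  exact add_le_add (by simp [f]) (hf_shift.tsum_le_tsum hf_le hgeom)

lemma one_sub_div_five_le_Gfun {t : ℝ} (ht0 : 0 ≤ t) (ht1 : t ≤ 1) : (1 - t) / 5 ≤ Gfun t := by
  rcases ht0.eq_or_lt with rfl | ht0
  · norm_num [Gfun]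
  have hhyp := hyp_one_le (b := 4 / 3) (c := 5 / 3) (by norm_num) (by norm_num)
    (sub_nonneg.2 ht1) (by linarith : 1 - t < 1)
  have : t * hyp 1 (4 / 3) (5 / 3) (1 - t) ≤ t + 4 / 5 * (1 - t) :=
    calc t * hyp 1 (4 / 3) (5 / 3) (1 - t)
        ≤ t * (1 + 4 / 3 / (5 / 3) * ((1 - t) / (1 - (1 - t)))) := by gcongr
      _ = t + 4 / 5 * (1 - t) := by rw [sub_sub_cancel]; field_simp
  unfold Gfun
  linarith

lemma sq_norm_sub_conj_pos {z w : ℂ} (hz : 0 < z.im) (hw : 0 < w.im) :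
    0 < ‖z - conj w‖ ^ 2 := by
  have : z - conj w ≠ 0 := fun h => by
    have := congrArg Complex.im h
    simp only [sub_im, conj_im, zero_im] at this
    linarith
  positivity

lemma one_sub_sigmaC {z w : ℂ} (hz : 0 < z.im) (hw : 0 < w.im) :
    1 - sigmaC z w = 4 * z.im * w.im / ‖z - conj w‖ ^ 2 := by
  have hpos := sq_norm_sub_conj_pos hz hw
  unfold sigmaC
  rw [eq_div_iff hpos.ne', sub_mul, div_mul_cancel₀ _ hpos.ne']
  simp only [Complex.sq_norm, normSq_apply, sub_re, sub_im, conj_re, conj_im]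
  ring

lemma im_one_div_div_im_one_div {z w : ℂ} (hz : z ≠ 0) (hw : 0 < w.im) :
    (1 / z).im / (1 / w).im = z.im * ‖w‖ ^ 2 / (‖z‖ ^ 2 * w.im) := by
  have hw0 : w ≠ 0 := fun h => by simp [h] at hw
  simp only [one_div, inv_im, Complex.sq_norm]
  have := normSq_pos.2 hz
  have := normSq_pos.2 hw0
  field_simp

lemma le_pbulk {w z : ℂ} (hw : 0 < w.im) (hz : 0 < z.im) :
    4 / 5 * ‖w‖ ^ 2 * z.im ^ 2 / (‖z‖ ^ 2 * ‖z - conj w‖ ^ 2) ≤ pbulk w z := by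
  have hz0 : z ≠ 0 := fun h => by simp [h] at hz
  have hsigma := one_sub_sigmaC hz hw
  have hσ1 : sigmaC z w ≤ 1 := by
    have : 0 ≤ 1 - sigmaC z w := hsigma ▸ by positivity
    linarith
  have hσ0 : 0 ≤ sigmaC z w := by unfold sigmaC; positivity
  have hpos := sq_norm_sub_conj_pos hz hw
  unfold pbulk
  rw [im_one_div_div_im_one_div hz0 hw]
  calc 4 / 5 * ‖w‖ ^ 2 * z.im ^ 2 / (‖z‖ ^ 2 * ‖z - conj w‖ ^ 2)
      = z.im * ‖w‖ ^ 2 / (‖z‖ ^ 2 * w.im) * ((1 - sigmaC z w) / 5) := by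
        rw [hsigma]; field_simp
    _ ≤ z.im * ‖w‖ ^ 2 / (‖z‖ ^ 2 * w.im) * Gfun (sigmaC z w) := by
        gcongr
        exact one_sub_div_five_le_Gfun hσ0 hσ1

def upperCone (T : ℝ) : Set ℂ := {z | T < z.im ∧ |z.re| < z.im}

lemma le_pbulk_of_mem_upperCone {w z : ℂ} (hw : 0 < w.im) (hz : z ∈ upperCone ‖w‖) :
    ‖w‖ ^ 2 / 15 / z.im ^ 2 ≤ pbulk w z := by
  obtain ⟨hwz, hre⟩ := hz
  have hy : 0 < z.im := (norm_nonneg w).trans_lt hwz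
  have hz0 : z ≠ 0 := fun h => by simp [h] at hy
  have hnorm_z : ‖z‖ ^ 2 ≤ 2 * z.im ^ 2 := by
    have : z.re ^ 2 ≤ z.im ^ 2 := by
      rw [← sq_abs]
      exact pow_le_pow_left₀ (abs_nonneg _) hre.le 2
    rw [Complex.sq_norm, normSq_apply]
    linarith
  have hnorm_sub : ‖z - conj w‖ ^ 2 ≤ 6 * z.im ^ 2 := by
    have h : ‖z - conj w‖ ≤ ‖z‖ + ‖w‖ := (norm_sub_le z (conj w)).trans_eq (by rw [norm_conj])
    calc ‖z - conj w‖ ^ 2 ≤ (‖z‖ + ‖w‖) ^ 2 := by gcongr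
      _ ≤ 2 * ‖z‖ ^ 2 + 2 * ‖w‖ ^ 2 := by nlinarith [sq_nonneg (‖z‖ - ‖w‖)]
      _ ≤ 6 * z.im ^ 2 := by nlinarith [norm_nonneg w]
  refine le_trans ?_ (le_pbulk hw hy)
  have := sq_norm_sub_conj_pos hy hw
  have : 0 < ‖z‖ := norm_pos_iff.2 hz0
  calc ‖w‖ ^ 2 / 15 / z.im ^ 2
      = 4 / 5 * ‖w‖ ^ 2 * z.im ^ 2 / (2 * z.im ^ 2 * (6 * z.im ^ 2)) := by field_simp; ring
    _ ≤ 4 / 5 * ‖w‖ ^ 2 * z.im ^ 2 / (‖z‖ ^ 2 * ‖z - conj w‖ ^ 2) := by gcongr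

lemma measurableSet_upperCone (T : ℝ) : MeasurableSet (upperCone T) :=
  (measurableSet_lt measurable_const Complex.measurable_im).inter
    (measurableSet_lt Complex.measurable_re.abs Complex.measurable_im)

lemma lintegral_upperCone_comp_im (T : ℝ) {g : ℝ → ℝ≥0∞} (hg : Measurable g) :
    ∫⁻ z in upperCone T, g z.im = ∫⁻ y in Ioi T, ENNReal.ofReal (2 * y) * g y := by
  set S : Set (ℝ × ℝ) := {p | T < p.2 ∧ |p.1| < p.2}
  have hS : MeasurableSet S :=
    (measurableSet_lt measurable_const measurable_snd).inter
      (measurableSet_lt measurable_fst.abs measurable_snd)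
  have hF : Measurable (S.indicator fun p => g p.2) := (hg.comp measurable_snd).indicator hS
  have hslice (y : ℝ) : ∫⁻ x, S.indicator (fun p => g p.2) (x, y) =
      (Ioi T).indicator (fun y => ENNReal.ofReal (2 * y) * g y) y := by
    by_cases hy : T < y
    · have : (fun x => S.indicator (fun p => g p.2) (x, y)) =
          (Ioo (-y) y).indicator fun _ => g y := by
        ext x
        simp only [S, indicator_apply, mem_ofPred_eq, mem_Ioo, hy, true_and, abs_lt]
      rw [this, lintegral_indicator_const measurableSet_Ioo, Real.volume_Ioo,
        indicator_of_mem (show y ∈ Ioi T from hy), mul_comm, two_mul, sub_neg_eq_add]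
    · simp [S, hy]
  have htransfer : ∫⁻ p, S.indicator (fun p => g p.2) p =
      ∫⁻ z, (upperCone T).indicator (fun z => g z.im) z := by
    rw [Complex.volume_preserving_equiv_real_prod.lintegral_map_equiv]
    rfl
  rw [← lintegral_indicator (measurableSet_upperCone T), ← htransfer, Measure.volume_eq_prod,
    lintegral_prod_symm _ hF.aemeasurable]
  simp_rw [hslice]
  rw [lintegral_indicator measurableSet_Ioi]

lemma lintegral_Ioi_inv_eq_top {T : ℝ} (hT : 0 < T) :
    ∫⁻ y in Ioi T, ENNReal.ofReal y⁻¹ = ⊤ := by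
  by_contra h
  have hpos : 0 ≤ᵐ[volume.restrict (Ioi T)] fun y : ℝ => y⁻¹ := by
    filter_upwards [ae_restrict_mem measurableSet_Ioi] with y hy
    exact inv_nonneg.2 (hT.trans hy).le
  exact not_integrableOn_Ioi_inv
    ((lintegral_ofReal_ne_top_iff_integrable measurable_inv.aestronglyMeasurable hpos).1 h)

lemma lintegral_upperCone_div_sq_im_eq_top {T c : ℝ} (hT : 0 < T) (hc : 0 < c) :
    ∫⁻ z in upperCone T, ENNReal.ofReal (c / z.im ^ 2) = ⊤ := by
  rw [lintegral_upperCone_comp_im T (g := fun y => ENNReal.ofReal (c / y ^ 2)) (by fun_prop)]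
  calc ∫⁻ y in Ioi T, ENNReal.ofReal (2 * y) * ENNReal.ofReal (c / y ^ 2)
      = ∫⁻ y in Ioi T, ENNReal.ofReal (2 * c) * ENNReal.ofReal y⁻¹ := by
        refine setLIntegral_congr_fun measurableSet_Ioi fun y hy => ?_
        have hy : 0 < y := hT.trans hy
        rw [← ENNReal.ofReal_mul (by positivity), ← ENNReal.ofReal_mul (by positivity)]
        congr 1
        field_simp
    _ = ⊤ := by
        rw [lintegral_const_mul _ measurable_inv.ennreal_ofReal, lintegral_Ioi_inv_eq_top hT,
          ENNReal.mul_top (by simpa using hc)]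

/-- the expected area of the SLE₈/₃ bubble with bulk point `w` is
infinite: `∫_ℍ p_w(z) dA(z) = ∞`. -/
theorem stmt16 (w : ℂ) (hw : 0 < w.im) :
    ∫⁻ z in {z : ℂ | 0 < z.im}, ENNReal.ofReal (pbulk w z) = ⊤ := by
  have hw0 : 0 < ‖w‖ := norm_pos_iff.2 fun h => by simp [h] at hw
  refine eq_top_iff.2 ?_
  calc ⊤ = ∫⁻ z in upperCone ‖w‖, ENNReal.ofReal (‖w‖ ^ 2 / 15 / z.im ^ 2) :=
        (lintegral_upperCone_div_sq_im_eq_top hw0 (by positivity)).symm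
    _ ≤ ∫⁻ z in upperCone ‖w‖, ENNReal.ofReal (pbulk w z) :=
        setLIntegral_mono' (measurableSet_upperCone _) fun z hz =>
          ENNReal.ofReal_le_ofReal (le_pbulk_of_mem_upperCone hw hz)
    _ ≤ ∫⁻ z in {z : ℂ | 0 < z.im}, ENNReal.ofReal (pbulk w z) :=
        lintegral_mono_set fun z hz => hw0.trans hz.1
end
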